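/- Let v₀, v₁, …, v₅ be vectors in a real vector space with symmetric bilinear form, with (vᵢ, vᵢ) = 2 for all i, (v₀, vᵢ) = −1 for i = 1,…,5, and (vᵢ, vⱼ) = 0 for distinct i, j ∈ {1,…,5}. Then there is no integer vector u_* = Σᵢ kᵢvᵢ (kᵢ ∈ ℤ) satisfying (u_*, v₀) = −2, (u_*, v₁) = −2, and (u_*, u_*) = 2. -/

import Mathlib

/-!
Write `u = ∑ kᵢ vᵢ` and `S = k₁ + ⋯ + k₅`. The three conditions read `S = 2k₀ + 2`,
`k₀ = 2k₁ + 2` and, after eliminating `S`, `k₁² + ⋯ + k₅² = (k₀ + 1)²`. Since `k² ≡ k (mod 2)`,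
the left side of the last equation has the parity of `S`, which is even, while `k₀ + 1` is odd.
-/

open Finset

theorem Int.even_sum_sq_sub_sum {ι : Type*} (s : Finset ι) (k : ι → ℤ) :
    Even (∑ i ∈ s, k i ^ 2 - ∑ i ∈ s, k i) := by
  rw [← sum_sub_distrib]
  exact even_sum _ fun i _ => by simpa [sq, mul_sub] using Int.even_mul_pred_self (k i)

theorem Int.sum_sq_ne_odd_sq {ι : Type*} {s : Finset ι} {k : ι → ℤ} {m : ℤ}
    (hsum : Even (∑ i ∈ s, k i)) (hm : Odd m) : ∑ i ∈ s, k i ^ 2 ≠ m ^ 2 := by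
  intro h
  have hsq : Even (∑ i ∈ s, k i ^ 2) := by
    simpa using (Int.even_sum_sq_sub_sum s k).add hsum
  exact Int.not_even_iff_odd.mpr (hm.pow (n := 2)) (h ▸ hsq)

section StarDiagram

variable {ι V : Type*} [Fintype ι] [AddCommGroup V] [Module ℝ V]
  {B : V →ₗ[ℝ] V →ₗ[ℝ] ℝ} {v : ι → V} {c : ι}

theorem apply_sum_intCast_smul_left (k : ι → ℤ) (w : V) :
    B (∑ i, (k i : ℝ) • v i) w = ∑ i, (k i : ℝ) * B (v i) w := by
  simp only [map_sum, map_smul, LinearMap.sum_apply, LinearMap.smul_apply, smul_eq_mul]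

theorem apply_sum_intCast_smul_right (k : ι → ℤ) (w : V) :
    B w (∑ i, (k i : ℝ) • v i) = ∑ i, (k i : ℝ) * B w (v i) := by
  simp only [map_sum, map_smul, smul_eq_mul]

theorem star_pairing_center [DecidableEq ι] (hBsymm : ∀ x y, B x y = B y x)
    (hnorm : ∀ i, B (v i) (v i) = 2)
    (hcenter : ∀ i, i ≠ c → B (v c) (v i) = -1) (k : ι → ℤ) :
    B (∑ i, (k i : ℝ) • v i) (v c) = ((2 * k c - ∑ i ∈ univ.erase c, k i : ℤ) : ℝ) := by
  rw [apply_sum_intCast_smul_left, ← add_sum_erase _ _ (mem_univ c), hnorm,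
    sum_congr rfl fun i hi => by rw [hBsymm, hcenter i (ne_of_mem_erase hi)]]
  push_cast
  simp only [mul_neg, mul_one, sum_neg_distrib]
  ring

theorem star_pairing_leaf (hnorm : ∀ i, B (v i) (v i) = 2)
    (hcenter : ∀ i, i ≠ c → B (v c) (v i) = -1)
    (houter : ∀ i j, i ≠ c → j ≠ c → i ≠ j → B (v i) (v j) = 0) {j : ι} (hj : j ≠ c)
    (k : ι → ℤ) : B (∑ i, (k i : ℝ) • v i) (v j) = ((2 * k j - k c : ℤ) : ℝ) := by
  rw [apply_sum_intCast_smul_left, Fintype.sum_eq_add j c hj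
    fun i ⟨hij, hic⟩ => by rw [houter i j hic hj hij, mul_zero], hnorm, hcenter j hj]
  push_cast
  ring

theorem star_pairing_self [DecidableEq ι] (hBsymm : ∀ x y, B x y = B y x)
    (hnorm : ∀ i, B (v i) (v i) = 2)
    (hcenter : ∀ i, i ≠ c → B (v c) (v i) = -1)
    (houter : ∀ i j, i ≠ c → j ≠ c → i ≠ j → B (v i) (v j) = 0) (k : ι → ℤ) :
    B (∑ i, (k i : ℝ) • v i) (∑ i, (k i : ℝ) • v i) =
      ((2 * (k c ^ 2 + ∑ i ∈ univ.erase c, k i ^ 2 - k c * ∑ i ∈ univ.erase c, k i) : ℤ) : ℝ) := by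
  rw [apply_sum_intCast_smul_right, ← add_sum_erase _ _ (mem_univ c),
    star_pairing_center hBsymm hnorm hcenter,
    sum_congr rfl (g := fun i => (k i : ℝ) * ((2 * k i - k c : ℤ) : ℝ)) fun i hi => by
      rw [star_pairing_leaf hnorm hcenter houter (ne_of_mem_erase hi)]]
  push_cast
  simp only [mul_sub, sum_sub_distrib, ← sum_mul, mul_left_comm _ (2 : ℝ), ← mul_sum, ← sq]
  ring

end StarDiagram

open Finset in
theorem no_root_for_003_in_31111 {V : Type*} [AddCommGroup V] [Module ℝ V]
    (B : V →ₗ[ℝ] V →ₗ[ℝ] ℝ) (hBsymm : ∀ x y, B x y = B y x)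
    (v : Fin 6 → V)
    (hnorm : ∀ i, B (v i) (v i) = 2)
    (hcenter : ∀ i : Fin 6, i ≠ 0 → B (v 0) (v i) = -1)
    (houter : ∀ i j : Fin 6, i ≠ 0 → j ≠ 0 → i ≠ j → B (v i) (v j) = 0) :
    ¬ ∃ k : Fin 6 → ℤ,
      (fun u => B u (v 0) = -2 ∧ B u (v 1) = -2 ∧ B u u = 2)
        (∑ i, (k i : ℝ) • v i) := by
  rintro ⟨k, h0, h1, h2⟩
  rw [star_pairing_center hBsymm hnorm hcenter] at h0
  rw [star_pairing_leaf hnorm hcenter houter one_ne_zero] at h1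
  rw [star_pairing_self hBsymm hnorm hcenter houter] at h2
  have hS : ∑ i ∈ univ.erase 0, k i = 2 * (k 0 + 1) := by
    have : 2 * k 0 - ∑ i ∈ univ.erase 0, k i = -2 := by exact_mod_cast h0
    linarith
  have hk0 : Odd (k 0 + 1) := by
    have : 2 * k 1 - k 0 = -2 := by exact_mod_cast h1
    exact ⟨k 1 + 1, by linarith⟩
  have hsq : ∑ i ∈ univ.erase 0, k i ^ 2 = (k 0 + 1) ^ 2 := by
    have : 2 * (k 0 ^ 2 + ∑ i ∈ univ.erase 0, k i ^ 2 - k 0 * ∑ i ∈ univ.erase 0, k i) = 2 := by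
      exact_mod_cast h2
    rw [hS] at this
    linarith
  exact Int.sum_sq_ne_odd_sq ⟨k 0 + 1, by rw [hS]; ring⟩ hk0 hsq
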